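/- Let X be a complex Banach space, let 1 ≤ p < ∞ and 1/p + 1/q = 1, and let (R(t))_{t>0} ⊆ L(X) be a strongly continuous family of bounded linear operators on X such that M := Σ_{k=0}^{∞} ‖R(·)‖_{L^q[k,k+1]} < ∞, where ‖R(·)‖_{L^q[k,k+1]} denotes the L^q-norm of the operator-norm function s ↦ ‖R(s)‖ over [k,k+1]. If g : ℝ → X is Stepanov p-almost anti-periodic, then the function G(t) := ∫_{−∞}^{t} R(t−s) g(s) ds, t ∈ ℝ, is well-defined (the integral converges absolutely for each t) and G is almost anti-periodic; moreover, if for some ε > 0 and τ > 0 one has ∫_t^{t+1} ‖g(s+τ) + g(s)‖^p ds ≤ ε^p for all t ∈ ℝ, then ‖G(t+τ) + G(t)‖ ≤ M·ε for all t ∈ ℝ. -/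

import Mathlib

open MeasureTheory
open scoped ENNReal

/-- A set `S` of (positive) real numbers is relatively dense. -/
def RelativelyDense (S : Set ℝ) : Prop :=
  ∃ l > 0, ∀ a : ℝ, 0 ≤ a → ∃ τ ∈ S, a ≤ τ ∧ τ ≤ a + l

/-- `f : ℝ → X` is almost anti-periodic. -/
def AlmostAntiPeriodic {X : Type*} [NormedAddCommGroup X] (f : ℝ → X) : Prop :=
  ∀ ε > 0, RelativelyDense {τ : ℝ | 0 < τ ∧ ∀ t : ℝ, ‖f (t + τ) + f t‖ ≤ ε}

/-- `g : ℝ → X` is Stepanov `p`-almost anti-periodic: the function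
`ĝ : ℝ → L^p([0,1] : X)`, `ĝ(t)(s) = g (t+s)`, is almost anti-periodic. -/
def StepanovAlmostAntiPeriodic {X : Type*} [NormedAddCommGroup X]
    (p : ℝ≥0∞) (g : ℝ → X) : Prop :=
  ∀ ε > 0, RelativelyDense {τ : ℝ | 0 < τ ∧ ∀ t : ℝ,
    eLpNorm (fun s => g (t + τ + s) + g (t + s)) p
        (MeasureTheory.volume.restrict (Set.Icc (0 : ℝ) 1))
      ≤ ENNReal.ofReal ε}

open Set Filter Topology

/-!
Reflecting `s ↦ t - s` writes `G(t) = ∫_{u > 0} R(u) g(t - u) du`. Cutting `(0, ∞)` into the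
unit intervals `(k, k + 1]` and applying Hölder's inequality on each of them gives
`∫_{u > 0} ‖R(u) h(t - u)‖ du ≤ M · sup_w ‖h‖_{L^p(w, w + 1]}` for every measurable `h`; the
function `‖R(·)‖` is measurable because, as a supremum of the continuous functions `‖R(·) x‖`,
it is lower semicontinuous. A Stepanov almost anti-periodic `g` has bounded `L^p` norms on unit
windows, so this gives absolute convergence, and with `h = g(· + τ) + g` it gives
`‖G(t + τ) + G(t)‖ ≤ M ε`. Hence `ε / (M + 1)`-antiperiods of `g` are `ε`-antiperiods of `G`.
-/

theorem RelativelyDense.mono {S T : Set ℝ} (hST : S ⊆ T) (hS : RelativelyDense S) :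
    RelativelyDense T := by
  obtain ⟨l, hl, h⟩ := hS
  exact ⟨l, hl, fun a ha => (h a ha).imp fun _ ⟨hτ, hτa⟩ => ⟨hST hτ, hτa⟩⟩

section Lp

variable {α β E : Type*} [MeasurableSpace α] [MeasurableSpace β] [NormedAddCommGroup E]
  {p : ℝ≥0∞}

theorem MeasureTheory.MeasurePreserving.eLpNorm_comp_restrict_preimage {μ : Measure α}
    {ν : Measure β} {e : α → β} (he : MeasurePreserving e μ ν) (he' : MeasurableEmbedding e)
    (f : β → E) (p : ℝ≥0∞) (s : Set β) :
    eLpNorm (fun x => f (e x)) p (μ.restrict (e ⁻¹' s)) = eLpNorm f p (ν.restrict s) := by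
  rw [← Function.comp_def, ← he'.eLpNorm_map_measure, ← he'.restrict_map, he.map_eq]

theorem MeasureTheory.MemLp.restrict_union {μ : Measure α} {f : α → E} {s t : Set α}
    (hs : MeasurableSet s) (ht : MeasurableSet t) (hfs : MemLp f p (μ.restrict s))
    (hft : MemLp f p (μ.restrict t)) : MemLp f p (μ.restrict (s ∪ t)) := by
  rw [← union_sdiff_self, ← memLp_indicator_iff_restrict (hs.union (ht.diff hs)),
    indicator_union_of_disjoint disjoint_sdiff_right]
  exact ((memLp_indicator_iff_restrict hs).2 hfs).add
    ((memLp_indicator_iff_restrict (ht.diff hs)).2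
      (hft.mono_measure (Measure.restrict_mono sdiff_subset le_rfl)))

theorem eLpNorm_comp_add_right_Ioc (f : ℝ → E) (p : ℝ≥0∞) (c a b : ℝ) :
    eLpNorm (fun x => f (x + c)) p (volume.restrict (Ioc a b)) =
      eLpNorm f p (volume.restrict (Ioc (a + c) (b + c))) := by
  simpa using (measurePreserving_add_right volume c).eLpNorm_comp_restrict_preimage
    (measurableEmbedding_addRight c) f p (Ioc (a + c) (b + c))

theorem eLpNorm_comp_sub_left_Ioc (f : ℝ → E) (p : ℝ≥0∞) (t a b : ℝ) :
    eLpNorm (fun x => f (t - x)) p (volume.restrict (Ioc a b)) =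
      eLpNorm f p (volume.restrict (Ioc (t - b) (t - a))) := by
  rw [← Measure.restrict_congr_set (Ico_ae_eq_Ioc (a := t - b))]
  simpa using (Measure.measurePreserving_sub_left volume t).eLpNorm_comp_restrict_preimage
    (MeasurableEquiv.subLeft t).measurableEmbedding f p (Ico (t - b) (t - a))

theorem eLpNorm_Icc_zero_one_comp_add_left (f : ℝ → E) (p : ℝ≥0∞) (t : ℝ) :
    eLpNorm (fun s => f (t + s)) p (volume.restrict (Icc 0 1)) =
      eLpNorm f p (volume.restrict (Ioc t (t + 1))) := by
  rw [← Measure.restrict_congr_set Ioc_ae_eq_Icc]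
  simpa [add_comm] using eLpNorm_comp_add_right_Ioc f p t 0 1

theorem memLp_restrict_Ioc_of_forall_Ioc_add_one {f : ℝ → E}
    (hf : ∀ t, MemLp f p (volume.restrict (Ioc t (t + 1)))) (a b : ℝ) :
    MemLp f p (volume.restrict (Ioc a b)) := by
  have hlong : ∀ n : ℕ, MemLp f p (volume.restrict (Ioc a (a + n))) := by
    intro n
    induction n with
    | zero => simp [memLp_measure_zero]
    | succ n ih =>
      rw [Nat.cast_succ, ← add_assoc, ← Ioc_union_Ioc_eq_Ioc (b := a + n)
        (by linarith [n.cast_nonneg (α := ℝ)]) (by linarith)]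
      exact ih.restrict_union measurableSet_Ioc measurableSet_Ioc (hf _)
  refine (hlong ⌈b - a⌉₊).mono_measure (Measure.restrict_mono (Ioc_subset_Ioc_right ?_) le_rfl)
  linarith [Nat.le_ceil (b - a)]

end Lp

section Stepanov

variable {E : Type*} [NormedAddCommGroup E] {p : ℝ≥0∞} {g : ℝ → E}

theorem StepanovAlmostAntiPeriodic.relativelyDense_antiperiods
    (hg : StepanovAlmostAntiPeriodic p g) {ε : ℝ} (hε : 0 < ε) :
    RelativelyDense {τ : ℝ | 0 < τ ∧ ∀ t : ℝ, eLpNorm (fun s => g (s + τ) + g s) p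
      (volume.restrict (Ioc t (t + 1))) ≤ ENNReal.ofReal ε} := by
  refine (hg ε hε).mono ?_
  rintro τ ⟨hτ, hτε⟩
  refine ⟨hτ, fun t => ?_⟩
  rw [← eLpNorm_Icc_zero_one_comp_add_left]
  simpa only [add_right_comm t τ] using hτε t

theorem eLpNorm_Ioc_le_of_antiperiod (hp : 1 ≤ p) (hg : AEStronglyMeasurable g volume)
    {τ : ℝ} {C : ℝ≥0∞}
    (hτ : ∀ t : ℝ, eLpNorm (fun s => g (s + τ) + g s) p (volume.restrict (Ioc t (t + 1))) ≤ C)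
    (w : ℝ) :
    eLpNorm g p (volume.restrict (Ioc (w + τ) (w + τ + 1))) ≤
        C + eLpNorm g p (volume.restrict (Ioc w (w + 1))) ∧
      eLpNorm g p (volume.restrict (Ioc w (w + 1))) ≤
        C + eLpNorm g p (volume.restrict (Ioc (w + τ) (w + τ + 1))) := by
  have hgτ : AEStronglyMeasurable (fun s => g (s + τ)) volume :=
    hg.comp_measurePreserving (measurePreserving_add_right volume τ)
  have hshift : eLpNorm (fun s => g (s + τ)) p (volume.restrict (Ioc w (w + 1))) =
      eLpNorm g p (volume.restrict (Ioc (w + τ) (w + τ + 1))) := by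
    rw [eLpNorm_comp_add_right_Ioc, add_right_comm]
  rw [← hshift]
  constructor
  · calc eLpNorm (fun s => g (s + τ)) p (volume.restrict (Ioc w (w + 1)))
        = eLpNorm ((fun s => g (s + τ) + g s) - g) p (volume.restrict (Ioc w (w + 1))) := by
          congr 1; ext s; simp
      _ ≤ _ := eLpNorm_sub_le (hgτ.add hg).restrict hg.restrict hp
      _ ≤ _ := by gcongr; exact hτ w
  · calc eLpNorm g p (volume.restrict (Ioc w (w + 1)))
        = eLpNorm ((fun s => g (s + τ) + g s) - fun s => g (s + τ)) p
            (volume.restrict (Ioc w (w + 1))) := by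
          congr 1; ext s; simp
      _ ≤ _ := eLpNorm_sub_le (hgτ.add hg).restrict hgτ.restrict hp
      _ ≤ _ := by gcongr; exact hτ w

theorem StepanovAlmostAntiPeriodic.exists_eLpNorm_Ioc_le (hp : 1 ≤ p)
    (hg : StepanovAlmostAntiPeriodic p g) (hgm : AEStronglyMeasurable g volume)
    (hloc : ∀ t : ℝ, MemLp g p (volume.restrict (Ioc t (t + 1)))) :
    ∃ C ≠ ⊤, ∀ u : ℝ, eLpNorm g p (volume.restrict (Ioc u (u + 1))) ≤ C := by
  obtain ⟨l, -, hl⟩ := hg.relativelyDense_antiperiods one_pos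
  set B := eLpNorm g p (volume.restrict (Ioc (-l) (l + 1)))
  have hB : B ≠ ⊤ := (memLp_restrict_Ioc_of_forall_Ioc_add_one hloc _ _).eLpNorm_ne_top
  have hwindow : ∀ w, -l ≤ w → w ≤ l → eLpNorm g p (volume.restrict (Ioc w (w + 1))) ≤ B :=
    fun w h₁ h₂ => eLpNorm_mono_measure _ <|
      Measure.restrict_mono (Ioc_subset_Ioc (by linarith) (by linarith)) le_rfl
  -- every window is moved into `[-l, l + 1]` by an antiperiod of size comparable to `|u|`
  refine ⟨ENNReal.ofReal 1 + B, by finiteness, fun u => ?_⟩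
  rcases le_or_gt 0 u with hu | hu
  · obtain ⟨τ, ⟨-, hτ⟩, hτ₁, hτ₂⟩ := hl u hu
    calc eLpNorm g p (volume.restrict (Ioc u (u + 1)))
        = eLpNorm g p (volume.restrict (Ioc (u - τ + τ) (u - τ + τ + 1))) := by
          rw [sub_add_cancel]
      _ ≤ _ := (eLpNorm_Ioc_le_of_antiperiod hp hgm hτ (u - τ)).1
      _ ≤ _ := by gcongr; exact hwindow _ (by linarith) (by linarith)
  · obtain ⟨τ, ⟨-, hτ⟩, hτ₁, hτ₂⟩ := hl (-u) (by linarith)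
    calc eLpNorm g p (volume.restrict (Ioc u (u + 1)))
        ≤ _ := (eLpNorm_Ioc_le_of_antiperiod hp hgm hτ u).2
      _ ≤ _ := by gcongr; exact hwindow _ (by linarith) (by linarith)

theorem StepanovAlmostAntiPeriodic.almostAntiPeriodic_of_forall_le {F : Type*}
    [NormedAddCommGroup F] (hg : StepanovAlmostAntiPeriodic p g) {G : ℝ → F} {K : ℝ}
    (hK : 0 ≤ K) (hG : ∀ ε > 0, ∀ τ : ℝ, 0 < τ →
      (∀ t : ℝ, eLpNorm (fun s => g (s + τ) + g s) p
        (volume.restrict (Ioc t (t + 1))) ≤ ENNReal.ofReal ε) →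
      ∀ t : ℝ, ‖G (t + τ) + G t‖ ≤ K * ε) :
    AlmostAntiPeriodic G := by
  intro ε hε
  have hε' : 0 < ε / (K + 1) := by positivity
  refine (hg.relativelyDense_antiperiods hε').mono ?_
  rintro τ ⟨hτ, hτε⟩
  refine ⟨hτ, fun t => (hG _ hε' τ hτ hτε t).trans ?_⟩
  rw [mul_div_assoc', div_le_iff₀ (by positivity)]
  nlinarith

end Stepanov

section OperatorFamily

variable {α 𝕜 E F : Type*} [NormedAddCommGroup E] [NormedAddCommGroup F]

section DenselyNormed

variable [DenselyNormedField 𝕜] [NormedSpace 𝕜 E] [NormedSpace 𝕜 F] [TopologicalSpace α]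
  {R : α → E →L[𝕜] F} {U : Set α}

theorem lowerSemicontinuous_indicator_opNorm (hU : IsOpen U)
    (hR : ∀ x, ContinuousOn (fun a => R a x) U) :
    LowerSemicontinuous (U.indicator fun a => ‖R a‖) := by
  intro a y hy
  by_cases ha : a ∈ U
  · rw [indicator_of_mem ha] at hy
    obtain ⟨x, hx, hyx⟩ := (R a).exists_lt_apply_of_lt_opNorm hy
    have hnear : ∀ᶠ b in 𝓝 a, y < ‖R b x‖ :=
      ((hR x).continuousAt (hU.mem_nhds ha)).norm.eventually (lt_mem_nhds hyx)
    filter_upwards [hnear, hU.mem_nhds ha] with b hb hbU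
    rw [indicator_of_mem hbU]
    exact hb.trans_le ((R b).unit_le_opNorm x hx.le)
  · rw [indicator_of_notMem ha] at hy
    exact Eventually.of_forall fun b => hy.trans_le (indicator_nonneg (fun _ _ => norm_nonneg _) b)

theorem aestronglyMeasurable_opNorm_restrict_of_continuousOn [MeasurableSpace α]
    [OpensMeasurableSpace α] (μ : Measure α) (hU : IsOpen U)
    (hR : ∀ x, ContinuousOn (fun a => R a x) U) :
    AEStronglyMeasurable (fun a => ‖R a‖) (μ.restrict U) :=
  ((lowerSemicontinuous_indicator_opNorm hU hR).measurable.aestronglyMeasurable).congr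
    (indicator_ae_eq_restrict hU.measurableSet)

end DenselyNormed

variable [NontriviallyNormedField 𝕜] [NormedSpace 𝕜 E] [NormedSpace 𝕜 F]

theorem aestronglyMeasurable_clm_apply_of_forall [MeasurableSpace α] {μ : Measure α}
    {A : α → E →L[𝕜] F} (hA : ∀ x, AEStronglyMeasurable (fun a => A a x) μ) {f : α → E}
    (hf : AEStronglyMeasurable f μ) : AEStronglyMeasurable (fun a => A a (f a)) μ := by
  obtain ⟨f', hf', hff'⟩ := hf
  have hsimple : ∀ φ : SimpleFunc α E, AEStronglyMeasurable (fun a => A a (φ a)) μ := by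
    intro φ
    induction φ using SimpleFunc.induction with
    | @const x s hs =>
      convert (hA x).indicator hs using 1
      ext a
      by_cases ha : a ∈ s <;> simp [ha]
    | add _ hφ hψ =>
      simp only [SimpleFunc.coe_add, Pi.add_apply, map_add]
      exact hφ.add hψ
  refine (aestronglyMeasurable_of_tendsto_ae atTop (fun n => hsimple (hf'.approx n))
    (ae_of_all _ fun a => ((A a).continuous.tendsto _).comp (hf'.tendsto_approx a))).congr ?_
  filter_upwards [hff'] with a ha
  rw [ha]

theorem lintegral_enorm_clm_apply_le [MeasurableSpace α] {μ : Measure α} {p q : ℝ≥0∞}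
    [p.HolderConjugate q] {A : α → E →L[𝕜] F} (hA : AEStronglyMeasurable (fun a => ‖A a‖) μ)
    {f : α → E} (hf : AEStronglyMeasurable f μ) :
    ∫⁻ a, ‖A a (f a)‖ₑ ∂μ ≤ eLpNorm (fun a => ‖A a‖) q μ * eLpNorm f p μ := by
  calc ∫⁻ a, ‖A a (f a)‖ₑ ∂μ = eLpNorm (fun a => A a (f a)) 1 μ :=
        eLpNorm_one_eq_lintegral_enorm.symm
    _ ≤ eLpNorm (fun a => ‖A a‖ * ‖f a‖) 1 μ :=
        eLpNorm_mono fun a => by simpa using (A a).le_opNorm (f a)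
    _ ≤ _ := by
        simpa using eLpNorm_le_eLpNorm_mul_eLpNorm'_of_norm hA hf (fun r x => r * ‖x‖) 1
          (ae_of_all _ fun a => by simp)

end OperatorFamily

section Reflection

variable {E : Type*} [NormedAddCommGroup E]

theorem integrableOn_Iic_comp_sub_left_iff {f : ℝ → E} {t : ℝ} :
    IntegrableOn (fun s => f (t - s)) (Iic t) ↔ IntegrableOn f (Ioi 0) := by
  rw [integrableOn_Iic_iff_integrableOn_Iio]
  simpa [Function.comp_def] using
    (Measure.measurePreserving_sub_left volume t).integrableOn_comp_preimage
    (MeasurableEquiv.subLeft t).measurableEmbedding (f := f) (s := Ioi 0)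

theorem integral_Iic_comp_sub_left [NormedSpace ℝ E] (f : ℝ → E) (t : ℝ) :
    ∫ s in Iic t, f (t - s) = ∫ u in Ioi 0, f u := by
  rw [integral_Iic_eq_integral_Iio]
  simpa using (Measure.measurePreserving_sub_left volume t).setIntegral_preimage_emb
    (MeasurableEquiv.subLeft t).measurableEmbedding f (Ioi 0)

end Reflection

section Convolution

variable {𝕜 E F : Type*} [DenselyNormedField 𝕜] [NormedAddCommGroup E] [NormedSpace 𝕜 E]
  [NormedAddCommGroup F] [NormedSpace 𝕜 F] {p q : ℝ≥0∞} {R : ℝ → E →L[𝕜] F}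

theorem Ioi_zero_subset_iUnion_Ioc_natCast : Ioi (0 : ℝ) ⊆ ⋃ k : ℕ, Ioc (k : ℝ) (k + 1) := by
  intro u (hu : 0 < u)
  refine mem_iUnion.2 ⟨⌈u⌉₊ - 1, ?_, ?_⟩
  · rw [Nat.cast_sub (Nat.one_le_ceil_iff.2 hu), Nat.cast_one]
    linarith [Nat.ceil_lt_add_one hu.le]
  · rw [Nat.cast_sub (Nat.one_le_ceil_iff.2 hu), Nat.cast_one, sub_add_cancel]
    exact Nat.le_ceil u

theorem lintegral_Ioi_enorm_clm_apply_le_tsum [p.HolderConjugate q]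
    (hR : AEStronglyMeasurable (fun u => ‖R u‖) (volume.restrict (Ioi 0))) {f : ℝ → E}
    (hf : AEStronglyMeasurable f (volume.restrict (Ioi 0))) :
    ∫⁻ u in Ioi 0, ‖R u (f u)‖ₑ ≤ ∑' k : ℕ,
      eLpNorm (fun u => ‖R u‖) q (volume.restrict (Ioc (k : ℝ) (k + 1))) *
        eLpNorm f p (volume.restrict (Ioc (k : ℝ) (k + 1))) := by
  have hsub : ∀ k : ℕ, volume.restrict (Ioc (k : ℝ) (k + 1)) ≤ volume.restrict (Ioi 0) :=
    fun k => Measure.restrict_mono (Ioc_subset_Ioi_self.trans (Ioi_subset_Ioi k.cast_nonneg))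
      le_rfl
  calc ∫⁻ u in Ioi 0, ‖R u (f u)‖ₑ
      ≤ ∫⁻ u in ⋃ k : ℕ, Ioc (k : ℝ) (k + 1), ‖R u (f u)‖ₑ :=
        lintegral_mono_set Ioi_zero_subset_iUnion_Ioc_natCast
    _ ≤ ∑' k : ℕ, ∫⁻ u in Ioc (k : ℝ) (k + 1), ‖R u (f u)‖ₑ := lintegral_iUnion_le _ _
    _ ≤ _ := ENNReal.tsum_le_tsum fun k =>
        lintegral_enorm_clm_apply_le (p := p) (hR.mono_measure (hsub k)) (hf.mono_measure (hsub k))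

theorem lintegral_Ioi_enorm_clm_apply_comp_sub_le [p.HolderConjugate q]
    (hR : ∀ x, ContinuousOn (fun u => R u x) (Ioi 0)) {h : ℝ → E}
    (hh : AEStronglyMeasurable h volume) {C : ℝ≥0∞}
    (hC : ∀ u : ℝ, eLpNorm h p (volume.restrict (Ioc u (u + 1))) ≤ C) (t : ℝ) :
    ∫⁻ u in Ioi 0, ‖R u (h (t - u))‖ₑ ≤
      (∑' k : ℕ, eLpNorm (fun u => ‖R u‖) q (volume.restrict (Ioc (k : ℝ) (k + 1)))) * C := by
  have hh' : AEStronglyMeasurable (fun u => h (t - u)) (volume.restrict (Ioi 0)) :=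
    (hh.comp_measurePreserving (Measure.measurePreserving_sub_left volume t)).restrict
  refine (lintegral_Ioi_enorm_clm_apply_le_tsum (p := p) (q := q)
    (aestronglyMeasurable_opNorm_restrict_of_continuousOn volume isOpen_Ioi hR) hh').trans ?_
  rw [← ENNReal.tsum_mul_right]
  gcongr with k
  rw [eLpNorm_comp_sub_left_Ioc, show t - k = t - (k + 1) + 1 by ring]
  exact hC _

theorem integrableOn_Ioi_clm_apply_comp_sub [p.HolderConjugate q]
    (hR : ∀ x, ContinuousOn (fun u => R u x) (Ioi 0))
    (hM : (∑' k : ℕ, eLpNorm (fun u => ‖R u‖) q (volume.restrict (Ioc (k : ℝ) (k + 1)))) ≠ ⊤)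
    {h : ℝ → E} (hh : AEStronglyMeasurable h volume) {C : ℝ≥0∞} (hC_ne_top : C ≠ ⊤)
    (hC : ∀ u : ℝ, eLpNorm h p (volume.restrict (Ioc u (u + 1))) ≤ C) (t : ℝ) :
    IntegrableOn (fun u => R u (h (t - u))) (Ioi 0) := by
  refine ⟨aestronglyMeasurable_clm_apply_of_forall (fun x => ?_) ?_, ?_⟩
  · exact (hR x).aestronglyMeasurable measurableSet_Ioi
  · exact (hh.comp_measurePreserving (Measure.measurePreserving_sub_left volume t)).restrict
  · exact (lintegral_Ioi_enorm_clm_apply_comp_sub_le (q := q) hR hh hC t).trans_lt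
      (ENNReal.mul_lt_top hM.lt_top hC_ne_top.lt_top)

theorem norm_integral_Ioi_clm_apply_comp_sub_le [NormedSpace ℝ F] [p.HolderConjugate q]
    (hR : ∀ x, ContinuousOn (fun u => R u x) (Ioi 0))
    (hM : (∑' k : ℕ, eLpNorm (fun u => ‖R u‖) q (volume.restrict (Ioc (k : ℝ) (k + 1)))) ≠ ⊤)
    {h : ℝ → E} (hh : AEStronglyMeasurable h volume) {ε : ℝ} (hε : 0 ≤ ε)
    (hC : ∀ u : ℝ, eLpNorm h p (volume.restrict (Ioc u (u + 1))) ≤ ENNReal.ofReal ε) (t : ℝ) :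
    ‖∫ u in Ioi 0, R u (h (t - u))‖ ≤
      (∑' k : ℕ, eLpNorm (fun u => ‖R u‖) q
        (volume.restrict (Ioc (k : ℝ) (k + 1)))).toReal * ε := by
  have hle := (enorm_integral_le_lintegral_enorm _).trans
    (lintegral_Ioi_enorm_clm_apply_comp_sub_le (q := q) hR hh hC t)
  rw [← toReal_enorm, ← ENNReal.toReal_ofReal hε, ← ENNReal.toReal_mul]
  exact ENNReal.toReal_mono (ENNReal.mul_ne_top hM ENNReal.ofReal_ne_top) hle

theorem integrableOn_Iic_clm_apply_sub [p.HolderConjugate q]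
    (hR : ∀ x, ContinuousOn (fun u => R u x) (Ioi 0))
    (hM : (∑' k : ℕ, eLpNorm (fun u => ‖R u‖) q (volume.restrict (Ioc (k : ℝ) (k + 1)))) ≠ ⊤)
    {h : ℝ → E} (hh : AEStronglyMeasurable h volume) {C : ℝ≥0∞} (hC_ne_top : C ≠ ⊤)
    (hC : ∀ u : ℝ, eLpNorm h p (volume.restrict (Ioc u (u + 1))) ≤ C) (t : ℝ) :
    IntegrableOn (fun s => R (t - s) (h s)) (Iic t) := by
  simpa only [sub_sub_cancel] using integrableOn_Iic_comp_sub_left_iff (t := t) |>.2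
    (integrableOn_Ioi_clm_apply_comp_sub hR hM hh hC_ne_top hC t)

theorem norm_integral_Iic_add_integral_Iic_le [NormedSpace ℝ F] [p.HolderConjugate q]
    (hR : ∀ x, ContinuousOn (fun u => R u x) (Ioi 0))
    (hM : (∑' k : ℕ, eLpNorm (fun u => ‖R u‖) q (volume.restrict (Ioc (k : ℝ) (k + 1)))) ≠ ⊤)
    {g : ℝ → E} (hg : AEStronglyMeasurable g volume) {C : ℝ≥0∞} (hC_ne_top : C ≠ ⊤)
    (hC : ∀ u : ℝ, eLpNorm g p (volume.restrict (Ioc u (u + 1))) ≤ C) {ε τ : ℝ} (hε : 0 ≤ ε)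
    (hτ : ∀ t : ℝ, eLpNorm (fun s => g (s + τ) + g s) p
      (volume.restrict (Ioc t (t + 1))) ≤ ENNReal.ofReal ε) (t : ℝ) :
    ‖(∫ s in Iic (t + τ), R (t + τ - s) (g s)) + ∫ s in Iic t, R (t - s) (g s)‖ ≤
      (∑' k : ℕ, eLpNorm (fun u => ‖R u‖) q
        (volume.restrict (Ioc (k : ℝ) (k + 1)))).toReal * ε := by
  have hreflect (t : ℝ) : ∫ s in Iic t, R (t - s) (g s) = ∫ u in Ioi 0, R u (g (t - u)) := by
    simpa only [sub_sub_cancel] using integral_Iic_comp_sub_left (fun u => R u (g (t - u))) t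
  have hint (t : ℝ) : IntegrableOn (fun u => R u (g (t - u))) (Ioi 0) :=
    integrableOn_Ioi_clm_apply_comp_sub hR hM hg hC_ne_top hC t
  have hgτ : AEStronglyMeasurable (fun s => g (s + τ) + g s) volume :=
    (hg.comp_measurePreserving (measurePreserving_add_right volume τ)).add hg
  rw [hreflect, hreflect, ← integral_add (hint _) (hint _)]
  simpa only [map_add, add_sub_right_comm] using
    norm_integral_Ioi_clm_apply_comp_sub_le hR hM hgτ hε hτ t

end Convolution

theorem convolution_almostAntiPeriodic_general
    {X : Type*} [NormedAddCommGroup X] [NormedSpace ℂ X]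
    (p q : ℝ≥0∞) (hp1 : 1 ≤ p) (hpq : p⁻¹ + q⁻¹ = 1)
    (R : ℝ → X →L[ℂ] X)
    (hRstrong : ∀ x : X, ContinuousOn (fun t => R t x) (Set.Ioi (0 : ℝ)))
    (g : ℝ → X) (hgmeas : AEStronglyMeasurable g MeasureTheory.volume)
    (hgloc : ∀ t : ℝ, MemLp g p (MeasureTheory.volume.restrict (Set.Ioc t (t + 1))))
    (hM : (∑' k : ℕ, eLpNorm (fun s => ‖R s‖) q
        (MeasureTheory.volume.restrict (Set.Ioc (k : ℝ) (k + 1)))) ≠ ⊤)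
    (hg : StepanovAlmostAntiPeriodic p g) :
    (∀ t : ℝ, IntegrableOn (fun s => R (t - s) (g s)) (Set.Iic t) MeasureTheory.volume) ∧
    AlmostAntiPeriodic (fun t => ∫ s in Set.Iic t, R (t - s) (g s)) ∧
    (∀ ε > 0, ∀ τ : ℝ, 0 < τ →
      (∀ t : ℝ, eLpNorm (fun s => g (s + τ) + g s) p
          (MeasureTheory.volume.restrict (Set.Ioc t (t + 1))) ≤ ENNReal.ofReal ε) →
      ∀ t : ℝ,
        ‖(∫ s in Set.Iic (t + τ), R (t + τ - s) (g s)) + ∫ s in Set.Iic t, R (t - s) (g s)‖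
          ≤ (∑' k : ℕ, eLpNorm (fun s => ‖R s‖) q
              (MeasureTheory.volume.restrict (Set.Ioc (k : ℝ) (k + 1)))).toReal * ε) := by
  have : p.HolderConjugate q := ENNReal.holderConjugate_iff.2 hpq
  obtain ⟨C, hC_ne_top, hC⟩ := hg.exists_eLpNorm_Ioc_le hp1 hgmeas hgloc
  have hbound := fun ε (hε : 0 < ε) τ (_ : 0 < τ) =>
    norm_integral_Iic_add_integral_Iic_le (τ := τ) hRstrong hM hgmeas hC_ne_top hC hε.le
  exact ⟨integrableOn_Iic_clm_apply_sub hRstrong hM hgmeas hC_ne_top hC,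
    hg.almostAntiPeriodic_of_forall_le ENNReal.toReal_nonneg hbound, hbound⟩

/-- If `(R(t))_{t>0} ⊆ L(X)` is strongly continuous with
`M = Σ_k ‖R(·)‖_{L^q[k,k+1]} < ∞` and `g` is Stepanov `p`-almost anti-periodic, then
`G(t) = ∫_{-∞}^t R(t-s) g(s) ds` is well defined (absolutely convergent Bochner
integral) and almost anti-periodic; moreover every common Stepanov `ε`-antiperiod `τ`
of `g` satisfies `‖G(t+τ) + G(t)‖ ≤ M ε` for all `t`. -/
theorem convolution_almostAntiPeriodic
    {X : Type*} [NormedAddCommGroup X] [NormedSpace ℂ X] [CompleteSpace X]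
    (p q : ℝ≥0∞) (hp1 : 1 ≤ p) (hp2 : p ≠ ⊤) (hpq : p⁻¹ + q⁻¹ = 1)
    (R : ℝ → X →L[ℂ] X)
    (hRstrong : ∀ x : X, ContinuousOn (fun t => R t x) (Set.Ioi (0 : ℝ)))
    (g : ℝ → X) (hgmeas : AEStronglyMeasurable g MeasureTheory.volume)
    (hgloc : ∀ t : ℝ, MemLp g p (MeasureTheory.volume.restrict (Set.Ioc t (t + 1))))
    (hM : (∑' k : ℕ, eLpNorm (fun s => ‖R s‖) q
        (MeasureTheory.volume.restrict (Set.Ioc (k : ℝ) (k + 1)))) ≠ ⊤)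
    (hg : StepanovAlmostAntiPeriodic p g) :
    (∀ t : ℝ, IntegrableOn (fun s => R (t - s) (g s)) (Set.Iic t) MeasureTheory.volume) ∧
    AlmostAntiPeriodic (fun t => ∫ s in Set.Iic t, R (t - s) (g s)) ∧
    (∀ ε > 0, ∀ τ : ℝ, 0 < τ →
      (∀ t : ℝ, eLpNorm (fun s => g (s + τ) + g s) p
          (MeasureTheory.volume.restrict (Set.Ioc t (t + 1))) ≤ ENNReal.ofReal ε) →
      ∀ t : ℝ,
        ‖(∫ s in Set.Iic (t + τ), R (t + τ - s) (g s)) + ∫ s in Set.Iic t, R (t - s) (g s)‖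
          ≤ (∑' k : ℕ, eLpNorm (fun s => ‖R s‖) q
              (MeasureTheory.volume.restrict (Set.Ioc (k : ℝ) (k + 1)))).toReal * ε) :=
  convolution_almostAntiPeriodic_general p q hp1 hpq R hRstrong g hgmeas hgloc hM hg
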